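/- Let q ≥ 5 be a prime power, m | q-1, u, t positive integers, v ≥ 0 with v ≤ u and u + v ≤ m - 1. Let ζ₁,…,ζ_t ∈ F_q be primitive m-th roots of unity and let D(u,v,t,m) be the code of length tm over F_q with parity-check matrix consisting of block-diagonal blocks A_i with rows (1, ζ_i^j, …, ζ_i^{j(m-1)}) for j = 1,…,u, plus v global rows built from exponents u+1,…,u+v in each block. Then D(u,v,t,m) is an (m-u, u+1)-LRC attaining the Singleton-type bound d = n - k + 1 - (⌈k/r⌉ - 1)(δ-1) with parameters [tm, tm - tu - v, u+v+1]_q, r = m - u, δ = u + 1. -/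

import Mathlib

/-!
Each block of `parityD` contains the parity checks of a cyclic code of length `m` with zeros
`ζ, ζ², …, ζᵘ`; by the Vandermonde (BCH) bound a nonzero block of a codeword has weight at least
`u + 1`, which is the locality. A codeword with two nonzero blocks thus has weight at least
`2(u + 1) ≥ u + v + 2`, while for a codeword supported on a single block the `v` global rows become
further zeros `ζᵘ⁺¹, …, ζᵘ⁺ᵛ` of that block, so its weight is at least `u + v + 1`. The
coefficients of `∏ₖ₌₁ᵘ⁺ᵛ (X - ζᵏ)`, placed in one block, attain this bound. On each block the rows
are the power vectors of distinct exponents `e ≤ u + v < m`, a transposed Vandermonde system, so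
the rows are independent and the dimension is `tm - tu - v`; then `⌈k/r⌉ = t` and the
Singleton-type bound is an identity.
-/

/-- Minimum Hamming weight (minimum distance) of a set of vectors. -/
noncomputable def minWt {ι F : Type*} [Fintype ι] [Zero F] [DecidableEq F]
    (C : Set (ι → F)) : ℕ :=
  sInf {w | ∃ x ∈ C, x ≠ 0 ∧ (Finset.univ.filter fun a => x a ≠ 0).card = w}

/-- (r,δ)-locality: every coordinate i lies in a repair set S of size at most
r + δ - 1 such that the code punctured to S has minimum distance at least δ. -/
def IsLRC {ι F : Type*} [Fintype ι] [DecidableEq ι] [Zero F] [DecidableEq F]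
    (C : Set (ι → F)) (r δ : ℕ) : Prop :=
  ∀ i : ι, ∃ S : Finset ι, i ∈ S ∧ S.card ≤ r + δ - 1 ∧
    ∀ x ∈ C, (∃ j ∈ S, x j ≠ 0) → δ ≤ (S.filter fun j => x j ≠ 0).card

/-- The parity-check matrix of the code D(u,v,t,m) over F_q, built from
primitive m-th roots of unity ζ_i. -/
def parityD (m u v t : ℕ) {F : Type*} [Field F] (ζ : Fin t → F) :
    Matrix ((Fin t × Fin u) ⊕ Fin v) (Fin t × Fin m) F :=
  fun r c =>
    match r with
    | Sum.inl (i, j) => if c.1 = i then ζ i ^ ((j.val + 1) * c.2.val) else 0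
    | Sum.inr j => ζ c.1 ^ ((u + j.val + 1) * c.2.val)

open Finset Polynomial

section Vandermonde

variable {F ι : Type*} [Field F] [Fintype ι]

theorem eq_zero_of_forall_sum_mul_pow_eq_zero {a y : ι → F} (ha : Function.Injective a)
    (h : ∀ j < Fintype.card ι, ∑ i, y i * a i ^ j = 0) : y = 0 := by
  let e := Fintype.equivFin ι
  have hy : y ∘ e.symm = 0 :=
    Matrix.eq_zero_of_forall_pow_sum_mul_pow_eq_zero (f := a ∘ e.symm)
      (ha.comp e.symm.injective) fun j => by
        rw [← h j j.isLt]
        exact e.symm.sum_comp fun i => y i * a i ^ (j : ℕ)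
  funext i
  simpa using congrFun hy (e i)

theorem lt_card_filter_ne_zero_of_forall_sum_mul_pow_eq_zero [DecidableEq F] {a y : ι → F}
    {s : ℕ} (ha : Function.Injective a) (hy : y ≠ 0) (h : ∀ j < s, ∑ i, y i * a i ^ j = 0) :
    s < #{i | y i ≠ 0} := by
  by_contra! hs
  set T : Finset ι := {i | y i ≠ 0}
  have hT : (fun i : T => y i) = 0 := by
    refine eq_zero_of_forall_sum_mul_pow_eq_zero (a := fun i : T => a i)
      (ha.comp Subtype.val_injective) fun j hj => ?_
    rw [Finset.sum_coe_sort T fun i => y i * a i ^ j,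
      Finset.sum_filter_of_ne fun i _ hi => left_ne_zero_of_mul hi]
    exact h j (by simp only [Fintype.card_coe] at hj; omega)
  refine hy (funext fun i => by_contra fun hi => hi ?_)
  exact congrFun hT ⟨i, by simpa [T] using hi⟩

theorem eq_zero_of_forall_sum_mul_pow_mul_eq_zero {m : ℕ} {z : F} (hz : orderOf z = m)
    {e : ι → ℕ} (he : Function.Injective e) (hem : ∀ k, e k < m) {h : ι → F}
    (hsum : ∀ c : Fin m, ∑ k, h k * z ^ (e k * c) = 0) : h = 0 := by
  have hcard : Fintype.card ι ≤ m := by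
    simpa using Fintype.card_le_of_injective (fun k => (⟨e k, hem k⟩ : Fin m))
      fun k k' hkk' => he (Fin.mk.inj hkk')
  refine eq_zero_of_forall_sum_mul_pow_eq_zero (a := fun k => z ^ e k)
    (fun k k' hkk' => he (pow_injOn_Iio_orderOf (hz ▸ hem k) (hz ▸ hem k') hkk'))
    fun j hj => ?_
  simpa only [pow_mul] using hsum ⟨j, by omega⟩

end Vandermonde

section CyclicCode

variable {F : Type*} [Field F] {m s : ℕ}

theorem lt_card_filter_ne_zero_of_forall_sum_pow_mul_eq_zero [DecidableEq F] {z : F}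
    (hz : orderOf z = m) {y : Fin m → F} (hy : y ≠ 0)
    (h : ∀ k, 1 ≤ k → k ≤ s → ∑ c : Fin m, z ^ (k * c) * y c = 0) :
    s < #{c | y c ≠ 0} := by
  obtain ⟨c₀, -⟩ := Function.ne_iff.mp hy
  have hz0 : z ≠ 0 := by
    rintro rfl
    have := hz ▸ pow_orderOf_eq_one (0 : F)
    simp [zero_pow (Fin.pos c₀).ne'] at this
  have hzinj : Function.Injective fun c : Fin m => z ^ (c : ℕ) := fun c c' hcc' =>
    Fin.ext (pow_injOn_Iio_orderOf (hz ▸ c.isLt) (hz ▸ c'.isLt) hcc')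
  have hsupp : #{c | y c * z ^ (c : ℕ) ≠ 0} = #{c | y c ≠ 0} := by
    simp only [ne_eq, mul_eq_zero, pow_eq_zero_iff', hz0, false_and, or_false]
  rw [← hsupp]
  refine lt_card_filter_ne_zero_of_forall_sum_mul_pow_eq_zero hzinj
    (fun hy' => hy (funext fun c => ?_)) fun j hj => ?_
  · simpa [hz0] using congrFun hy' c
  · rw [← h (j + 1) (by omega) (by omega)]
    refine Finset.sum_congr rfl fun c _ => ?_
    rw [mul_assoc, ← pow_succ', ← pow_mul, mul_comm, mul_comm (c : ℕ)]

theorem exists_ne_zero_card_le_forall_sum_pow_mul_eq_zero [DecidableEq F] (z : F)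
    (hs : s < m) : ∃ y : Fin m → F, y ≠ 0 ∧ #{c | y c ≠ 0} ≤ s + 1 ∧
      ∀ k, 1 ≤ k → k ≤ s → ∑ c : Fin m, z ^ (k * c) * y c = 0 := by
  set g : F[X] := ∏ k ∈ Icc 1 s, (X - C (z ^ k))
  have hg : g.Monic := monic_prod_of_monic _ _ fun k _ => monic_X_sub_C _
  have hdeg : g.natDegree = s := by
    rw [natDegree_finsetProd_X_sub_C_eq_card, Nat.card_Icc, Nat.add_sub_cancel]
  refine ⟨fun c => g.coeff c, fun h => ?_, ?_, fun k hk1 hks => ?_⟩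
  · simpa [← hdeg, hg.coeff_natDegree] using congrFun h ⟨s, hs⟩
  · calc #{c : Fin m | g.coeff c ≠ 0} ≤ #(range (s + 1)) :=
          card_le_card_of_injOn (fun c => (c : ℕ))
            (fun c hc => by
              simp only [coe_filter, mem_univ, true_and] at hc
              simpa [Nat.lt_succ_iff, ← hdeg] using le_natDegree_of_ne_zero hc)
            Fin.val_injective.injOn
      _ = s + 1 := card_range _
  · have hroot : g.eval (z ^ k) = 0 := by
      rw [eval_prod]
      exact prod_eq_zero (mem_Icc.mpr ⟨hk1, hks⟩) (by simp)
    rw [← hroot, eval_eq_sum_range' (hdeg ▸ hs), ← Fin.sum_univ_eq_sum_range]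
    exact Finset.sum_congr rfl fun c _ => by rw [mul_comm, pow_mul]

end CyclicCode

theorem card_filter_univ_prod {α β : Type*} [Fintype α] [Fintype β] (p : α × β → Prop)
    [DecidablePred p] : #{a | p a} = ∑ i : α, #{b | p (i, b)} := by
  rw [card_filter, Fintype.sum_prod_type]
  exact sum_congr rfl fun i _ => (card_filter _ _).symm

theorem Matrix.finrank_ker_mulVecLin_of_linearIndependent_row {K m n : Type*} [Field K]
    [Fintype m] [Fintype n] {M : Matrix m n K} (hM : LinearIndependent K M.row) :
    Module.finrank K (LinearMap.ker M.mulVecLin) = Fintype.card n - Fintype.card m := by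
  have hrank := LinearMap.finrank_range_add_finrank_ker M.mulVecLin
  rw [Module.finrank_fintype_fun_eq_card] at hrank
  have := hM.rank_matrix
  rw [Matrix.rank] at this
  omega

theorem minWt_eq_of_forall_le_of_exists_le {ι F : Type*} [Fintype ι] [Zero F] [DecidableEq F]
    {C : Set (ι → F)} {d : ℕ} (hle : ∀ x ∈ C, x ≠ 0 → d ≤ #{i | x i ≠ 0})
    (hex : ∃ x ∈ C, x ≠ 0 ∧ #{i | x i ≠ 0} ≤ d) : minWt C = d := by
  obtain ⟨x, hxC, hx0, hxd⟩ := hex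
  have hmem : #{i | x i ≠ 0} ∈ {w | ∃ y ∈ C, y ≠ 0 ∧ #{i | y i ≠ 0} = w} := ⟨x, hxC, hx0, rfl⟩
  refine le_antisymm ((Nat.sInf_le hmem).trans hxd) (le_csInf ⟨_, hmem⟩ ?_)
  rintro w ⟨y, hyC, hy0, rfl⟩
  exact hle y hyC hy0

theorem ceil_natSub_div_eq {t r v : ℕ} (ht : 1 ≤ t) (hvr : v < r) :
    ⌈((t * r - v : ℕ) : ℚ) / (r : ℚ)⌉ = t := by
  have hr : (0 : ℚ) < r := by exact_mod_cast hvr.trans_le' (Nat.zero_le v)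
  have hv : v ≤ t * r := hvr.le.trans (Nat.le_mul_of_pos_left r ht)
  rw [Int.ceil_eq_iff, Nat.cast_sub hv, Nat.cast_mul, sub_div, mul_div_cancel_right₀ _ hr.ne']
  have hvr' : (v : ℚ) / r < 1 := (div_lt_one hr).mpr (by exact_mod_cast hvr)
  have hv0 : 0 ≤ (v : ℚ) / r := by positivity
  push_cast
  constructor <;> linarith

section parityD

open Matrix

variable {F : Type*} [Field F] {m u v t : ℕ} {ζ : Fin t → F}

theorem parityD_mulVec_eq_zero_iff {x : Fin t × Fin m → F} :
    parityD m u v t ζ *ᵥ x = 0 ↔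
      (∀ i (j : Fin u), ∑ c : Fin m, ζ i ^ (((j : ℕ) + 1) * c) * x (i, c) = 0) ∧
      ∀ j : Fin v, ∑ i, ∑ c : Fin m, ζ i ^ ((u + (j : ℕ) + 1) * c) * x (i, c) = 0 := by
  simp only [funext_iff, Sum.forall, Prod.forall, Pi.zero_apply, Matrix.mulVec, dotProduct,
    parityD, Fintype.sum_prod_type, ite_mul, zero_mul, sum_ite_irrel, sum_const_zero,
    sum_ite_eq', mem_univ, if_true]

theorem linearIndependent_row_parityD (ht : 1 ≤ t) (huv : u + v < m)
    (hζ : ∀ i, orderOf (ζ i) = m) : LinearIndependent F (parityD m u v t ζ).row := by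
  rw [Fintype.linearIndependent_iff]
  intro g hg
  have hblock (i : Fin t) : Sum.elim (fun j => g (.inl (i, j))) (fun j => g (.inr j)) = 0 := by
    refine eq_zero_of_forall_sum_mul_pow_mul_eq_zero (hζ i)
      (e := Sum.elim (fun j : Fin u => (j : ℕ) + 1) fun j : Fin v => u + j + 1)
      ((add_left_injective 1).comp Fin.val_injective |>.sumElim
        ((add_left_injective 1).comp ((add_right_injective u).comp Fin.val_injective))
        fun j j' => by simp only [Function.comp_apply, ne_eq, Nat.add_right_cancel_iff]; omega)
      (by rintro (j | j) <;> simp only [Sum.elim_inl, Sum.elim_inr] <;> omega) fun c => ?_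
    simpa [Fintype.sum_sum_type, Fintype.sum_prod_type, parityD, Matrix.row] using
      congrFun hg (i, c)
  rintro (⟨i, j⟩ | j)
  · exact congrFun (hblock i) (.inl j)
  · exact congrFun (hblock ⟨0, ht⟩) (.inr j)

variable [DecidableEq F]

theorem parityD_block_weight_ge (hζ : ∀ i, orderOf (ζ i) = m) {x : Fin t × Fin m → F}
    (hx : parityD m u v t ζ *ᵥ x = 0) {i : Fin t} (hxi : (fun c => x (i, c)) ≠ 0) :
    u + 1 ≤ #{c | x (i, c) ≠ 0} :=
  lt_card_filter_ne_zero_of_forall_sum_pow_mul_eq_zero (hζ i) hxi fun k hk1 hku => by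
    obtain ⟨j, rfl⟩ := Nat.exists_eq_add_of_le' hk1
    exact (parityD_mulVec_eq_zero_iff.mp hx).1 i ⟨j, by omega⟩

theorem parityD_weight_ge (hζ : ∀ i, orderOf (ζ i) = m) (hvu : v ≤ u)
    {x : Fin t × Fin m → F} (hx : parityD m u v t ζ *ᵥ x = 0) (hx0 : x ≠ 0) :
    u + v + 1 ≤ #{a | x a ≠ 0} := by
  rw [card_filter_univ_prod]
  by_cases htwo : ∃ i i', i ≠ i' ∧ (fun c => x (i, c)) ≠ 0 ∧ (fun c => x (i', c)) ≠ 0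
  · obtain ⟨i, i', hii', hi, hi'⟩ := htwo
    calc u + v + 1 ≤ (u + 1) + (u + 1) := by omega
      _ ≤ #{c | x (i, c) ≠ 0} + #{c | x (i', c) ≠ 0} :=
          add_le_add (parityD_block_weight_ge hζ hx hi) (parityD_block_weight_ge hζ hx hi')
      _ = ∑ k ∈ {i, i'}, #{c | x (k, c) ≠ 0} :=
          (sum_pair (f := fun k => #{c | x (k, c) ≠ 0}) hii').symm
      _ ≤ ∑ k, #{c | x (k, c) ≠ 0} := sum_le_sum_of_subset (subset_univ _)
  push Not at htwo
  obtain ⟨i₀, hi₀⟩ : ∃ i, (fun c => x (i, c)) ≠ 0 := by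
    by_contra! h
    exact hx0 (funext fun a => congrFun (h a.1) a.2)
  have hblock : ∀ i ≠ i₀, ∀ c, x (i, c) = 0 := fun i hi c =>
    congrFun (htwo i₀ i (Ne.symm hi) hi₀) c
  rw [sum_eq_single i₀ (fun i _ hi => by simp [hblock i hi]) (by simp)]
  refine lt_card_filter_ne_zero_of_forall_sum_pow_mul_eq_zero (hζ i₀) hi₀ fun k hk1 hkuv => ?_
  obtain ⟨hlocal, hglobal⟩ := parityD_mulVec_eq_zero_iff.mp hx
  obtain ⟨j, rfl⟩ := Nat.exists_eq_add_of_le' hk1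
  rcases lt_or_ge j u with hju | hju
  · exact hlocal i₀ ⟨j, hju⟩
  · obtain ⟨j, rfl⟩ := Nat.exists_eq_add_of_le hju
    have := hglobal ⟨j, by omega⟩
    rwa [sum_eq_single i₀ (fun i _ hi => by simp [hblock i hi]) (by simp)] at this

theorem parityD_exists_weight_le (ht : 1 ≤ t) (huv : u + v < m) :
    ∃ x : Fin t × Fin m → F, parityD m u v t ζ *ᵥ x = 0 ∧ x ≠ 0 ∧ #{a | x a ≠ 0} ≤ u + v + 1 := by
  let i₀ : Fin t := ⟨0, ht⟩
  obtain ⟨y, hy0, hyw, hy⟩ := exists_ne_zero_card_le_forall_sum_pow_mul_eq_zero (ζ i₀) huv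
  have hsum (k : ℕ) : ∑ i, ∑ c : Fin m, ζ i ^ (k * (c : ℕ)) * (if i = i₀ then y c else 0) =
      ∑ c : Fin m, ζ i₀ ^ (k * (c : ℕ)) * y c := by
    rw [sum_eq_single i₀ (fun i _ hi => by simp [hi]) (by simp)]
    simp
  refine ⟨fun a => if a.1 = i₀ then y a.2 else 0, parityD_mulVec_eq_zero_iff.mpr ⟨?_, ?_⟩, ?_, ?_⟩
  · intro i j
    by_cases hi : i = i₀
    · subst hi
      simpa using hy _ (by omega) (by omega)
    · simp [hi]
  · intro j
    rw [hsum]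
    exact hy _ (by omega) (by omega)
  · intro h
    exact hy0 (funext fun c => by simpa using congrFun h (i₀, c))
  · rw [card_filter_univ_prod, sum_eq_single i₀ (fun i _ hi => by simp [hi]) (by simp)]
    simpa using hyw

theorem isLRC_ker_parityD (hζ : ∀ i, orderOf (ζ i) = m) :
    IsLRC ((LinearMap.ker (parityD m u v t ζ).mulVecLin : Submodule F _)
      : Set (Fin t × Fin m → F)) (m - u) (u + 1) := by
  intro a
  refine ⟨univ.map (Function.Embedding.sectR a.1 (Fin m)), by simp,
    by simp only [card_map, card_univ, Fintype.card_fin]; omega, ?_⟩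
  intro x hx ⟨b, hb, hxb⟩
  simp only [mem_map, mem_univ, true_and, Function.Embedding.sectR_apply] at hb
  obtain ⟨c, rfl⟩ := hb
  rw [filter_map, card_map]
  exact parityD_block_weight_ge hζ hx fun h => hxb (congrFun h c)

end parityD

theorem stmt_11_general (m u v t : ℕ) (hu : 1 ≤ u) (ht : 1 ≤ t) (hvu : v ≤ u)
    (huv : u + v ≤ m - 1)
    {F : Type*} [Field F] [DecidableEq F]
    (ζ : Fin t → F) (hζ : ∀ i, orderOf (ζ i) = m) :
    IsLRC ((LinearMap.ker (parityD m u v t ζ).mulVecLin : Submodule F _)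
        : Set (Fin t × Fin m → F)) (m - u) (u + 1) ∧
    Module.finrank F (LinearMap.ker (parityD m u v t ζ).mulVecLin)
        = t * m - t * u - v ∧
    minWt ((LinearMap.ker (parityD m u v t ζ).mulVecLin : Submodule F _)
        : Set (Fin t × Fin m → F)) = u + v + 1 ∧
    ((u + v + 1 : ℤ) =
      (t * m : ℤ) - (t * m - t * u - v : ℕ) + 1 -
        (⌈((t * m - t * u - v : ℕ) : ℚ) / ((m - u : ℕ) : ℚ)⌉ - 1) * ((u + 1 : ℤ) - 1)) := by
  have huvm : u + v < m := by omega
  have hdim : t * m - t * u - v = t * (m - u) - v := by rw [Nat.mul_sub]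
  have hv : v ≤ t * m - t * u := by
    rw [← Nat.mul_sub]
    exact (show v ≤ m - u by omega).trans (Nat.le_mul_of_pos_left _ ht)
  refine ⟨isLRC_ker_parityD hζ, ?_, ?_, ?_⟩
  · rw [Matrix.finrank_ker_mulVecLin_of_linearIndependent_row
      (linearIndependent_row_parityD ht huvm hζ)]
    simp only [Fintype.card_prod, Fintype.card_sum, Fintype.card_fin]
    omega
  · exact minWt_eq_of_forall_le_of_exists_le (fun x hx hx0 => parityD_weight_ge hζ hvu hx hx0)
      (by simpa using parityD_exists_weight_le (ζ := ζ) ht huvm)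
  · rw [hdim, ceil_natSub_div_eq ht (by omega), ← hdim,
      Nat.cast_sub hv, Nat.cast_sub (Nat.mul_le_mul_left t (by omega))]
    push_cast
    ring

/-- D(u,v,t,m) is an (m-u, u+1)-LRC with parameters
[tm, tm - tu - v, u+v+1]_q attaining the Singleton-type bound. -/
theorem stmt_11 (p e q m u v t : ℕ) (hp : p.Prime) (he : 0 < e) (hq : q = p ^ e)
    (hq5 : 5 ≤ q) (hm : m ∣ q - 1) (hu : 1 ≤ u) (ht : 1 ≤ t) (hvu : v ≤ u)
    (huv : u + v ≤ m - 1)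
    {F : Type*} [Field F] [Fintype F] [DecidableEq F]
    (hF : Fintype.card F = q)
    (ζ : Fin t → F) (hζ : ∀ i, orderOf (ζ i) = m) :
    IsLRC ((LinearMap.ker (parityD m u v t ζ).mulVecLin : Submodule F _)
        : Set (Fin t × Fin m → F)) (m - u) (u + 1) ∧
    Module.finrank F (LinearMap.ker (parityD m u v t ζ).mulVecLin)
        = t * m - t * u - v ∧
    minWt ((LinearMap.ker (parityD m u v t ζ).mulVecLin : Submodule F _)
        : Set (Fin t × Fin m → F)) = u + v + 1 ∧
    ((u + v + 1 : ℤ) =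
      (t * m : ℤ) - (t * m - t * u - v : ℕ) + 1 -
        (⌈((t * m - t * u - v : ℕ) : ℚ) / ((m - u : ℕ) : ℚ)⌉ - 1) * ((u + 1 : ℤ) - 1)) :=
  stmt_11_general m u v t hu ht hvu huv ζ hζ
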